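/- Let f : ℝ → ℝ be smooth and β, c, μ, σ real constants. If p, u, v, w : ℝ × ℝ → ℝ are smooth and satisfy the second-layer potential system ∂ₓv = f(p), ∂ₜv = μ ∂ₓp + u, ∂ₜw = c² p + (β − μ − σ) ∂ₜp, and ∂ₓw = −σ ∂ₓp + u at every point, then (p,u) satisfies the first-layer potential system ∂ₓu = f′(p)·∂ₜp − μ ∂²ₓp and ∂ₜu = c² ∂ₓp + (β − μ) ∂ₜ∂ₓp at every point; consequently p solves the generalized Westervelt equation ∂²ₜ(f(p)) − β ∂ₜ∂²ₓp = c² ∂²ₓp. -/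

import Mathlib

noncomputable def Dt (F : ℝ × ℝ → ℝ) : ℝ × ℝ → ℝ :=
  fun z => deriv (fun s => F (s, z.2)) z.1

noncomputable def Dx (F : ℝ × ℝ → ℝ) : ℝ × ℝ → ℝ :=
  fun z => deriv (fun y => F (z.1, y)) z.2

/-- `(p, u, v, w)` solves the second-layer potential system
`vₓ = f(p)`, `vₜ = μ pₓ + u`, `wₜ = c² p + (β − μ − σ) pₜ`, `wₓ = −σ pₓ + u`. -/
def SecondLayerPotentialSystem (f : ℝ → ℝ) (β c μ σ : ℝ) (p u v w : ℝ × ℝ → ℝ) : Prop :=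
  ∀ z : ℝ × ℝ,
    Dx v z = f (p z) ∧
    Dt v z = μ * Dx p z + u z ∧
    Dt w z = c ^ 2 * p z + (β - μ - σ) * Dt p z ∧
    Dx w z = -σ * Dx p z + u z

lemma sliceT_diff {F : ℝ × ℝ → ℝ} (hF : ContDiff ℝ (⊤ : ℕ∞) F) (b : ℝ) :
    Differentiable ℝ (fun s => F (s, b)) :=
  (hF.comp (contDiff_id.prodMk contDiff_const)).differentiable (by simp)

lemma sliceX_diff {F : ℝ × ℝ → ℝ} (hF : ContDiff ℝ (⊤ : ℕ∞) F) (a : ℝ) :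
    Differentiable ℝ (fun y => F (a, y)) :=
  (hF.comp (contDiff_const.prodMk contDiff_id)).differentiable (by simp)

lemma Dt_eq {F : ℝ × ℝ → ℝ} (hF : Differentiable ℝ F) (z : ℝ × ℝ) :
    Dt F z = fderiv ℝ F z ((1 : ℝ), (0 : ℝ)) := by
  have hg : HasDerivAt (fun s : ℝ => (s, z.2)) ((1 : ℝ), (0 : ℝ)) z.1 :=
    (hasDerivAt_id z.1).prodMk (hasDerivAt_const z.1 z.2)
  have h : HasDerivAt (fun s => F (s, z.2)) (fderiv ℝ F z ((1:ℝ),(0:ℝ))) z.1 :=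
    (hF (z.1, z.2)).hasFDerivAt.comp_hasDerivAt z.1 hg
  exact h.deriv

lemma Dx_eq {F : ℝ × ℝ → ℝ} (hF : Differentiable ℝ F) (z : ℝ × ℝ) :
    Dx F z = fderiv ℝ F z ((0 : ℝ), (1 : ℝ)) := by
  have hg : HasDerivAt (fun y : ℝ => (z.1, y)) ((0 : ℝ), (1 : ℝ)) z.2 :=
    (hasDerivAt_const z.2 z.1).prodMk (hasDerivAt_id z.2)
  have h : HasDerivAt (fun y => F (z.1, y)) (fderiv ℝ F z ((0:ℝ),(1:ℝ))) z.2 :=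
    (hF (z.1, z.2)).hasFDerivAt.comp_hasDerivAt z.2 hg
  exact h.deriv

lemma contDiff_Dt {F : ℝ × ℝ → ℝ} (hF : ContDiff ℝ (⊤ : ℕ∞) F) : ContDiff ℝ (⊤ : ℕ∞) (Dt F) := by
  have : Dt F = fun z => fderiv ℝ F z ((1 : ℝ), (0 : ℝ)) :=
    funext fun z => Dt_eq (hF.differentiable (by simp)) z
  rw [this]
  exact (hF.fderiv_right (by simp)).clm_apply contDiff_const

lemma contDiff_Dx {F : ℝ × ℝ → ℝ} (hF : ContDiff ℝ (⊤ : ℕ∞) F) : ContDiff ℝ (⊤ : ℕ∞) (Dx F) := by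
  have : Dx F = fun z => fderiv ℝ F z ((0 : ℝ), (1 : ℝ)) :=
    funext fun z => Dx_eq (hF.differentiable (by simp)) z
  rw [this]
  exact (hF.fderiv_right (by simp)).clm_apply contDiff_const

lemma Dt_Dx_comm {F : ℝ × ℝ → ℝ} (hF : ContDiff ℝ (⊤ : ℕ∞) F) (z : ℝ × ℝ) :
    Dt (Dx F) z = Dx (Dt F) z := by
  have hF' : Differentiable ℝ F := hF.differentiable (by simp)
  have hf' : Differentiable ℝ (fderiv ℝ F) := (hF.fderiv_right (m := (⊤ : ℕ∞)) (by simp)).differentiable (by simp)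
  have h1 : Dt (Dx F) z = fderiv ℝ (Dx F) z ((1:ℝ),(0:ℝ)) :=
    Dt_eq ((contDiff_Dx hF).differentiable (by simp)) z
  have h2 : Dx (Dt F) z = fderiv ℝ (Dt F) z ((0:ℝ),(1:ℝ)) :=
    Dx_eq ((contDiff_Dt hF).differentiable (by simp)) z
  have e1 : Dx F = fun y => fderiv ℝ F y ((0:ℝ),(1:ℝ)) := funext fun y => Dx_eq hF' y
  have e2 : Dt F = fun y => fderiv ℝ F y ((1:ℝ),(0:ℝ)) := funext fun y => Dt_eq hF' y
  rw [h1, h2, e1, e2]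
  rw [fderiv_clm_apply (hf' z) (differentiableAt_const _),
      fderiv_clm_apply (hf' z) (differentiableAt_const _)]
  simp only [fderiv_const, fderiv_const_apply, Pi.zero_apply, ContinuousLinearMap.comp_zero,
    ContinuousLinearMap.zero_apply, zero_add, ContinuousLinearMap.add_apply,
    ContinuousLinearMap.flip_apply]
  exact second_derivative_symmetric (fun y => (hF' y).hasFDerivAt)
    (hf' z).hasFDerivAt _ _

lemma Dt_lin {F G : ℝ × ℝ → ℝ} (hF : ContDiff ℝ (⊤ : ℕ∞) F) (hG : ContDiff ℝ (⊤ : ℕ∞) G)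
    (a b : ℝ) (z : ℝ × ℝ) :
    Dt (fun y => a * F y + b * G y) z = a * Dt F z + b * Dt G z := by
  unfold Dt
  have h1 : DifferentiableAt ℝ (fun s => F (s, z.2)) z.1 := sliceT_diff hF z.2 z.1
  have h2 : DifferentiableAt ℝ (fun s => G (s, z.2)) z.1 := sliceT_diff hG z.2 z.1
  rw [deriv_fun_add ((h1.const_mul a)) ((h2.const_mul b)), deriv_const_mul a h1,
    deriv_const_mul b h2]

lemma Dx_lin {F G : ℝ × ℝ → ℝ} (hF : ContDiff ℝ (⊤ : ℕ∞) F) (hG : ContDiff ℝ (⊤ : ℕ∞) G)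
    (a b : ℝ) (z : ℝ × ℝ) :
    Dx (fun y => a * F y + b * G y) z = a * Dx F z + b * Dx G z := by
  unfold Dx
  have h1 : DifferentiableAt ℝ (fun y => F (z.1, y)) z.2 := sliceX_diff hF z.1 z.2
  have h2 : DifferentiableAt ℝ (fun y => G (z.1, y)) z.2 := sliceX_diff hG z.1 z.2
  rw [deriv_fun_add ((h1.const_mul a)) ((h2.const_mul b)), deriv_const_mul a h1,
    deriv_const_mul b h2]

lemma Dt_comp {f : ℝ → ℝ} {p : ℝ × ℝ → ℝ} (hf : ContDiff ℝ (⊤ : ℕ∞) f) (hp : ContDiff ℝ (⊤ : ℕ∞) p)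
    (z : ℝ × ℝ) :
    Dt (fun y => f (p y)) z = deriv f (p z) * Dt p z := by
  unfold Dt
  have h1 : DifferentiableAt ℝ (fun s => p (s, z.2)) z.1 := sliceT_diff hp z.2 z.1
  have h2 : DifferentiableAt ℝ f (p (z.1, z.2)) := (hf.differentiable (by simp)) _
  exact deriv_comp z.1 h2 h1

/-- Any solution of the second-layer potential system solves the first-layer
potential system, and consequently `p` solves the Westervelt equation. -/
theorem secondLayerPotential_implies_firstLayer_and_westervelt
    (f : ℝ → ℝ) (hf : ContDiff ℝ (⊤ : ℕ∞) f) (β c μ σ : ℝ)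
    (p u v w : ℝ × ℝ → ℝ)
    (hp : ContDiff ℝ (⊤ : ℕ∞) p) (hu : ContDiff ℝ (⊤ : ℕ∞) u)
    (hv : ContDiff ℝ (⊤ : ℕ∞) v) (hw : ContDiff ℝ (⊤ : ℕ∞) w)
    (hsys : SecondLayerPotentialSystem f β c μ σ p u v w) :
    (∀ z : ℝ × ℝ,
      Dx u z = deriv f (p z) * Dt p z - μ * Dx (Dx p) z ∧
      Dt u z = c ^ 2 * Dx p z + (β - μ) * Dt (Dx p) z) ∧
    (∀ z : ℝ × ℝ,
      Dt (Dt (fun w' => f (p w'))) z - β * Dt (Dx (Dx p)) z = c ^ 2 * Dx (Dx p) z) := by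
  have hDtv := contDiff_Dt hv
  have hDxp := contDiff_Dx hp
  have hDtp := contDiff_Dt hp
  have hDxw := contDiff_Dx hw
  have hDxu := contDiff_Dx hu
  have hDxDxp := contDiff_Dx hDxp
  have hDtDxp := contDiff_Dt hDxp
  -- first layer, first equation
  have part1 : ∀ z : ℝ × ℝ, Dx u z = deriv f (p z) * Dt p z - μ * Dx (Dx p) z := by
    intro z
    have hue : u = fun y => 1 * Dt v y + (-μ) * Dx p y := by
      funext y; have h := (hsys y).2.1; ring_nf; linarith
    have hvx : Dx v = fun y => f (p y) := funext fun y => (hsys y).1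
    have h1 : Dx u z = 1 * Dx (Dt v) z + (-μ) * Dx (Dx p) z := by
      rw [hue]; exact Dx_lin hDtv hDxp 1 (-μ) z
    have h2 : Dx (Dt v) z = deriv f (p z) * Dt p z := by
      rw [← Dt_Dx_comm hv z, hvx, Dt_comp hf hp]
    rw [h1, h2]; ring
  -- first layer, second equation
  have part2 : ∀ z : ℝ × ℝ, Dt u z = c ^ 2 * Dx p z + (β - μ) * Dt (Dx p) z := by
    intro z
    have hue : u = fun y => 1 * Dx w y + σ * Dx p y := by
      funext y; have h := (hsys y).2.2.2; ring_nf; linarith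
    have hwt : Dt w = fun y => c ^ 2 * p y + (β - μ - σ) * Dt p y :=
      funext fun y => (hsys y).2.2.1
    have h1 : Dt u z = 1 * Dt (Dx w) z + σ * Dt (Dx p) z := by
      rw [hue]; exact Dt_lin hDxw hDxp 1 σ z
    have h2 : Dt (Dx w) z = c ^ 2 * Dx p z + (β - μ - σ) * Dt (Dx p) z := by
      rw [Dt_Dx_comm hw z, hwt, Dx_lin hp hDtp (c ^ 2) (β - μ - σ) z,
        ← Dt_Dx_comm hp z]
    rw [h1, h2]; ring
  refine ⟨fun z => ⟨part1 z, part2 z⟩, fun z => ?_⟩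
  -- Westervelt
  have hfpe : Dt (fun w' => f (p w')) = fun y => 1 * Dx u y + μ * Dx (Dx p) y := by
    funext y; rw [Dt_comp hf hp, part1 y]; ring
  have h1 : Dt (Dt (fun w' => f (p w'))) z = 1 * Dt (Dx u) z + μ * Dt (Dx (Dx p)) z := by
    rw [hfpe]; exact Dt_lin hDxu hDxDxp 1 μ z
  have h2 : Dt (Dx u) z = c ^ 2 * Dx (Dx p) z + (β - μ) * Dt (Dx (Dx p)) z := by
    have hut : Dt u = fun y => c ^ 2 * Dx p y + (β - μ) * Dt (Dx p) y :=
      funext fun y => part2 y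
    rw [Dt_Dx_comm hu z, hut, Dx_lin hDxp hDtDxp (c ^ 2) (β - μ) z,
      ← Dt_Dx_comm hDxp z]
  rw [h1, h2]; ring
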